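/- Let T = (T_1,…,T_n) be a commuting multicontraction on a complex Hilbert space H and let λ ∈ 𝔹^n. If T is of class C_1, i.e. ker A_∞(T) = {0}, then φ_λ(T) is of class C_1, i.e. ker A_∞(φ_λ(T)) = {0}. -/

import Mathlib

open ContinuousLinearMap Filter

set_option synthInstance.maxHeartbeats 1000000
set_option maxHeartbeats 1000000


/-- `PiLp` over complete fibers is complete. -/
instance PiLp.instCompleteSpace' (p : ENNReal) [Fact (1 ≤ p)] {ι : Type*} [Fintype ι]
    (β : ι → Type*) [∀ i, NormedAddCommGroup (β i)] [∀ i, CompleteSpace (β i)] :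
    CompleteSpace (PiLp p β) :=
  (UniformEquiv.completeSpace_iff
    { toEquiv := WithLp.equiv p (∀ i, β i)
      uniformContinuous_toFun := PiLp.uniformContinuous_ofLp (p := p) (β := β)
      uniformContinuous_invFun := PiLp.uniformContinuous_toLp (p := p) (β := β) }).mpr inferInstance

noncomputable section

variable {E₁ E₂ : Type*} [NormedAddCommGroup E₁] [InnerProductSpace ℂ E₁] [CompleteSpace E₁]
  [NormedAddCommGroup E₂] [InnerProductSpace ℂ E₂] [CompleteSpace E₂]

/-- The defect operator `D_C = (1 - C*C)^(1/2)` of a contraction `C`. -/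
def defect (C : E₁ →L[ℂ] E₂) : E₁ →L[ℂ] E₁ := CFC.sqrt (1 - adjoint C ∘L C)

/-- The defect operator `D_{C*} = (1 - C C*)^(1/2)` of a contraction `C`. -/
def defectStar (C : E₁ →L[ℂ] E₂) : E₂ →L[ℂ] E₂ := CFC.sqrt (1 - C ∘L adjoint C)

/-- The fractional transform `Ψ_A(W) = A + D_{A*} (1 + W A*)⁻¹ W D_A`. -/
def Psi (A W : E₁ →L[ℂ] E₂) : E₁ →L[ℂ] E₂ :=
  A + defectStar A ∘L Ring.inverse (1 + W ∘L adjoint A) ∘L (W ∘L defect A)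

/-- The defect space `𝒟_C = closure (D_C E₁)`. -/
def defectSpace (C : E₁ →L[ℂ] E₂) : Submodule ℂ E₁ :=
  (LinearMap.range (defect C : E₁ →ₗ[ℂ] E₁)).topologicalClosure

/-- The defect space `𝒟_{C*} = closure (D_{C*} E₂)`. -/
def defectStarSpace (C : E₁ →L[ℂ] E₂) : Submodule ℂ E₂ :=
  (LinearMap.range (defectStar C : E₂ →ₗ[ℂ] E₂)).topologicalClosure

theorem mem_defectSpace (C : E₁ →L[ℂ] E₂) (x : E₁) : defect C x ∈ defectSpace C :=
  Submodule.le_topologicalClosure _ (LinearMap.mem_range_self (defect C : E₁ →ₗ[ℂ] E₁) x)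

theorem mem_defectStarSpace (C : E₁ →L[ℂ] E₂) (y : E₂) : defectStar C y ∈ defectStarSpace C :=
  Submodule.le_topologicalClosure _ (LinearMap.mem_range_self (defectStar C : E₂ →ₗ[ℂ] E₂) y)

variable {H : Type*} [NormedAddCommGroup H] [InnerProductSpace ℂ H] [CompleteSpace H] {n : ℕ}

/-- `H^n` with its Hilbert space (ℓ²) structure. -/
abbrev Hn (H : Type*) (n : ℕ) : Type _ := PiLp 2 (fun _ : Fin n => H)

/-- The `i`-th coordinate projection `H^n → H`. -/
def projL (i : Fin n) : Hn H n →L[ℂ] H :=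
  ContinuousLinearMap.proj i ∘L
    (PiLp.continuousLinearEquiv 2 ℂ (fun _ : Fin n => H)).toContinuousLinearMap

/-- The `i`-th coordinate inclusion `H → H^n`. -/
def inclL (i : Fin n) : H →L[ℂ] Hn H n :=
  (PiLp.continuousLinearEquiv 2 ℂ (fun _ : Fin n => H)).symm.toContinuousLinearMap ∘L
    ContinuousLinearMap.pi (fun j => if j = i then ContinuousLinearMap.id ℂ H else 0)

/-- The row operator `H^n → H` associated to an `n`-tuple of operators. -/
def rowOp (T : Fin n → H →L[ℂ] H) : Hn H n →L[ℂ] H := ∑ i, T i ∘L projL i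

/-- The row operator `H^n → H`, `(x_1, …, x_n) ↦ Σ z_i x_i`, associated with `z ∈ ℂⁿ`. -/
def rowC (z : EuclideanSpace ℂ (Fin n)) : Hn H n →L[ℂ] H := ∑ i, z i • projL i

/-- The completely positive map `ρ_T(X) = Σ T_i X T_i^*`. -/
def rho (T : Fin n → H →L[ℂ] H) (X : H →L[ℂ] H) : H →L[ℂ] H :=
  ∑ i, T i ∘L X ∘L adjoint (T i)

/-- The components of a row operator `R : H^n → H`: `R_i = R ∘ ι_i`. -/
def comps (R : Hn H n →L[ℂ] H) : Fin n → H →L[ℂ] H := fun i => R ∘L inclL i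

/-- `φ_λ(T) = Ψ_𝛌(−T)` for a tuple `T` and `λ ∈ 𝔹ⁿ`. -/
def phiOp (lam : EuclideanSpace ℂ (Fin n)) (T : Fin n → H →L[ℂ] H) : Hn H n →L[ℂ] H :=
  Psi (rowC lam) (-(rowOp T))

/-- The full-space characteristic function
`Θ_R(z) = -R + D_{R*} (1 - 𝐳 R*)⁻¹ 𝐳 D_R : H^n → H` of a row contraction `R`. -/
def Theta (R : Hn H n →L[ℂ] H) (z : EuclideanSpace ℂ (Fin n)) : Hn H n →L[ℂ] H :=
  -R + defectStar R ∘L Ring.inverse (1 - rowC z ∘L adjoint R) ∘L (rowC z ∘L defect R)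

/-- The involutive automorphism `φ_λ` of the unit ball `𝔹ⁿ`:
`φ_λ(z) = λ - s_λ (1 - ⟨z,λ⟩)⁻¹ (z - (1 - s_λ) P_λ z)`, where `⟨z,λ⟩ = Σ z_i conj λ_i`,
`s_λ = (1 - |λ|²)^(1/2)` and `P_λ` is the projection onto the span of `λ` (`P_0 = 0`). -/
def ballAut (lam z : EuclideanSpace ℂ (Fin n)) : EuclideanSpace ℂ (Fin n) :=
  lam - ((Real.sqrt (1 - ‖lam‖ ^ 2) : ℂ) * (1 - (inner ℂ lam z : ℂ))⁻¹) •
    (z - ((1 : ℂ) - (Real.sqrt (1 - ‖lam‖ ^ 2) : ℂ)) •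
      (((inner ℂ lam z : ℂ) / ((‖lam‖ : ℂ) ^ 2)) • lam))


namespace Statement17Aux

variable {H : Type*} [NormedAddCommGroup H] [InnerProductSpace ℂ H] [CompleteSpace H] {n : ℕ}

lemma finset_sum_comp {E F G : Type*} [NormedAddCommGroup E] [NormedAddCommGroup F]
    [NormedAddCommGroup G] [NormedSpace ℂ E] [NormedSpace ℂ F] [NormedSpace ℂ G]
    {ι : Type*} (s : Finset ι) (f : ι → (F →L[ℂ] G)) (g : E →L[ℂ] F) :
    (∑ i ∈ s, f i) ∘L g = ∑ i ∈ s, (f i ∘L g) := by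
  ext x; simp

lemma comp_finset_sum {E F G : Type*} [NormedAddCommGroup E] [NormedAddCommGroup F]
    [NormedAddCommGroup G] [NormedSpace ℂ E] [NormedSpace ℂ F] [NormedSpace ℂ G]
    {ι : Type*} (s : Finset ι) (h : F →L[ℂ] G) (f : ι → (E →L[ℂ] F)) :
    h ∘L (∑ i ∈ s, f i) = ∑ i ∈ s, (h ∘L f i) := by
  ext x; simp

lemma projL_apply (i : Fin n) (x : Hn H n) : projL i x = x i := rfl

lemma inclL_apply (i j : Fin n) (x : H) : (inclL i x : Hn H n) j = if j = i then x else 0 := by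
  by_cases h : j = i <;> simp [inclL, h]

lemma projL_comp_inclL (i j : Fin n) :
    projL (H := H) i ∘L inclL j = if i = j then (1 : H →L[ℂ] H) else 0 := by
  ext x
  by_cases h : i = j <;>
    simp [ContinuousLinearMap.comp_apply, projL_apply, inclL_apply, h]

lemma adjoint_inclL (i : Fin n) :
    ContinuousLinearMap.adjoint (inclL (H := H) (n := n) i) = projL i := by
  symm
  rw [ContinuousLinearMap.eq_adjoint_iff]
  intro x y
  rw [projL_apply, PiLp.inner_apply]
  rw [Finset.sum_congr rfl (fun j _ => ?_), Finset.sum_ite_eq' Finset.univ i fun j => inner ℂ (x j) y]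
  · simp
  · rw [inclL_apply]
    rw [apply_ite (fun z => (inner ℂ (x j) z : ℂ)), inner_zero_right]

lemma adjoint_projL (i : Fin n) :
    ContinuousLinearMap.adjoint (projL (H := H) (n := n) i) = inclL i := by
  rw [← adjoint_inclL, ContinuousLinearMap.adjoint_adjoint]

end Statement17Aux
set_option linter.unusedSectionVars false

namespace Statement17Aux

variable {H : Type*} [NormedAddCommGroup H] [InnerProductSpace ℂ H] [CompleteSpace H] {n : ℕ}

lemma rowOp_comp_inclL (T : Fin n → H →L[ℂ] H) (i : Fin n) : rowOp T ∘L inclL i = T i := by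
  unfold rowOp
  rw [finset_sum_comp]
  have e : ∀ j ∈ Finset.univ, (T j ∘L projL (H := H) j) ∘L inclL i
      = if j = i then T j else 0 := by
    intro j _
    rw [ContinuousLinearMap.comp_assoc, projL_comp_inclL]
    by_cases h : j = i <;> simp [h, ContinuousLinearMap.one_def, ContinuousLinearMap.comp_id]
  rw [Finset.sum_congr rfl e, Finset.sum_ite_eq' Finset.univ i T]
  simp

lemma rowC_comp_inclL (z : EuclideanSpace ℂ (Fin n)) (i : Fin n) :
    rowC (H := H) z ∘L inclL i = z i • 1 := by
  unfold rowC
  rw [finset_sum_comp]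
  have e : ∀ j ∈ Finset.univ, (z j • projL (H := H) j) ∘L inclL i
      = if j = i then z j • (1 : H →L[ℂ] H) else 0 := by
    intro j _
    rw [ContinuousLinearMap.smul_comp, projL_comp_inclL]
    by_cases h : j = i <;> simp [h, ContinuousLinearMap.one_def, ContinuousLinearMap.comp_id]
  rw [Finset.sum_congr rfl e,
    Finset.sum_ite_eq' Finset.univ i (fun j => z j • (1 : H →L[ℂ] H))]
  simp

lemma adjoint_rowOp (T : Fin n → H →L[ℂ] H) :
    ContinuousLinearMap.adjoint (rowOp T)
      = ∑ i, inclL i ∘L ContinuousLinearMap.adjoint (T i) := by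
  unfold rowOp
  rw [map_sum]
  exact Finset.sum_congr rfl fun i _ => by
    rw [ContinuousLinearMap.adjoint_comp, adjoint_projL]

lemma adjoint_rowC (z : EuclideanSpace ℂ (Fin n)) :
    ContinuousLinearMap.adjoint (rowC (H := H) z)
      = ∑ i, starRingEnd ℂ (z i) • inclL i := by
  unfold rowC
  rw [map_sum]
  exact Finset.sum_congr rfl fun i _ => by
    rw [map_smulₛₗ, adjoint_projL]

lemma rowOp_comp_adjoint_rowOp (T : Fin n → H →L[ℂ] H) :
    rowOp T ∘L ContinuousLinearMap.adjoint (rowOp T)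
      = ∑ i, T i ∘L ContinuousLinearMap.adjoint (T i) := by
  rw [adjoint_rowOp, comp_finset_sum]
  exact Finset.sum_congr rfl fun i _ => by
    rw [← ContinuousLinearMap.comp_assoc, rowOp_comp_inclL]

lemma rowOp_comp_adjoint_rowC (T : Fin n → H →L[ℂ] H) (z : EuclideanSpace ℂ (Fin n)) :
    rowOp T ∘L ContinuousLinearMap.adjoint (rowC z)
      = ∑ i, starRingEnd ℂ (z i) • T i := by
  rw [adjoint_rowC, comp_finset_sum]
  exact Finset.sum_congr rfl fun i _ => by
    rw [ContinuousLinearMap.comp_smul, rowOp_comp_inclL]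

lemma sum_conj_mul_self (z : EuclideanSpace ℂ (Fin n)) :
    (∑ i, starRingEnd ℂ (z i) * z i) = (((‖z‖^2 : ℝ)) : ℂ) := by
  have h : (inner ℂ z z : ℂ) = ∑ i, starRingEnd ℂ (z i) * z i := by
    rw [PiLp.inner_apply]; exact Finset.sum_congr rfl fun i _ => by rw [RCLike.inner_apply]; ring
  rw [← h, inner_self_eq_norm_sq_to_K]
  norm_num

lemma rowC_comp_adjoint_rowC (z : EuclideanSpace ℂ (Fin n)) :
    rowC (H := H) z ∘L ContinuousLinearMap.adjoint (rowC z) = (((‖z‖^2 : ℝ)) : ℂ) • 1 := by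
  rw [adjoint_rowC, comp_finset_sum, ← sum_conj_mul_self z, Finset.sum_smul]
  exact Finset.sum_congr rfl fun i _ => by
    rw [ContinuousLinearMap.comp_smul, rowC_comp_inclL, smul_smul, mul_comm]

end Statement17Aux
namespace Statement17Aux

variable {H : Type*} [NormedAddCommGroup H] [InnerProductSpace ℂ H] [CompleteSpace H] {n : ℕ}

lemma rho_isPositive (T : Fin n → H →L[ℂ] H) {X : H →L[ℂ] H} (hX : X.IsPositive) :
    (rho T X).IsPositive := by
  unfold rho
  exact Finset.sum_induction _ _ (fun a b ha hb => ha.add hb)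
    ContinuousLinearMap.isPositive_zero (fun i _ => hX.conj_adjoint (T i))

lemma rho_sub (T : Fin n → H →L[ℂ] H) (X Y : H →L[ℂ] H) :
    rho T (X - Y) = rho T X - rho T Y := by
  unfold rho
  rw [← Finset.sum_sub_distrib]
  exact Finset.sum_congr rfl fun i _ => by
    rw [ContinuousLinearMap.sub_comp, ContinuousLinearMap.comp_sub]

lemma rho_one (T : Fin n → H →L[ℂ] H) :
    rho T 1 = ∑ i, T i ∘L ContinuousLinearMap.adjoint (T i) := by
  unfold rho
  exact Finset.sum_congr rfl fun i _ => by
    rw [ContinuousLinearMap.one_def, ContinuousLinearMap.id_comp]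

lemma rho_eq_star (ψ : Fin n → H →L[ℂ] H) (X : H →L[ℂ] H) :
    rho ψ X = ∑ i, ψ i * X * star (ψ i) := by
  unfold rho
  exact Finset.sum_congr rfl fun i _ => by
    rw [ContinuousLinearMap.star_eq_adjoint, ContinuousLinearMap.mul_def,
      ContinuousLinearMap.mul_def, ContinuousLinearMap.comp_assoc]

lemma isPositive_limit {A : H →L[ℂ] H} {f : ℕ → H →L[ℂ] H}
    (hf : ∀ k, (f k).IsPositive)
    (h : ∀ x, Filter.Tendsto (fun k => f k x) Filter.atTop (nhds (A x))) : A.IsPositive := by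
  rw [ContinuousLinearMap.isPositive_def']
  constructor
  · rw [ContinuousLinearMap.isSelfAdjoint_iff']
    have : A = ContinuousLinearMap.adjoint A := by
      rw [ContinuousLinearMap.eq_adjoint_iff]
      intro x y
      have h1 : Filter.Tendsto (fun k => (inner ℂ (f k x) y : ℂ)) Filter.atTop
          (nhds (inner ℂ (A x) y)) := (h x).inner tendsto_const_nhds
      have h2 : Filter.Tendsto (fun k => (inner ℂ x (f k y) : ℂ)) Filter.atTop
          (nhds (inner ℂ x (A y))) := tendsto_const_nhds.inner (h y)
      have he : (fun k => (inner ℂ (f k x) y : ℂ)) = fun k => (inner ℂ x (f k y) : ℂ) := by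
        funext k
        have hsa := ContinuousLinearMap.isSelfAdjoint_iff'.mp (hf k).isSelfAdjoint
        have := ContinuousLinearMap.adjoint_inner_left (f k) y x
        rw [hsa] at this
        exact this
      rw [he] at h1
      exact tendsto_nhds_unique h1 h2
    exact this.symm
  · intro x
    have h2 : Filter.Tendsto (fun k => Complex.re (inner ℂ (f k x) x : ℂ)) Filter.atTop
        (nhds (Complex.re (inner ℂ (A x) x : ℂ))) :=
      (Complex.continuous_re.tendsto _).comp ((h x).inner tendsto_const_nhds)
    exact ge_of_tendsto' h2 fun k => (hf k).re_inner_nonneg_left x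

lemma rho_fixed (T : Fin n → H →L[ℂ] H) {A : H →L[ℂ] H}
    (h : ∀ x, Filter.Tendsto (fun k => ((rho T)^[k] 1) x) Filter.atTop (nhds (A x))) :
    rho T A = A := by
  ext x
  have h1 : Filter.Tendsto (fun k => ((rho T)^[k+1] (1 : H →L[ℂ] H)) x) Filter.atTop
      (nhds (A x)) := (h x).comp (Filter.tendsto_add_atTop_nat 1)
  have hev : ∀ (Y : H →L[ℂ] H), (rho T Y) x
      = ∑ i, T i (Y (ContinuousLinearMap.adjoint (T i) x)) := by
    intro Y; simp [rho]
  have h2 : Filter.Tendsto (fun k => ((rho T) ((rho T)^[k] 1)) x) Filter.atTop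
      (nhds ((rho T A) x)) := by
    simp only [hev]
    exact tendsto_finset_sum _ fun i _ =>
      ((T i).continuous.tendsto _).comp (h (ContinuousLinearMap.adjoint (T i) x))
  have h3 : (fun k => ((rho T)^[k+1] (1 : H →L[ℂ] H)) x)
      = fun k => ((rho T) ((rho T)^[k] 1)) x := by
    funext k; rw [Function.iterate_succ_apply']
  rw [h3] at h1
  exact tendsto_nhds_unique h2 h1

lemma isPositive_real_smul_one {r : ℝ} (hr : 0 ≤ r) :
    (((r : ℂ)) • (1 : H →L[ℂ] H)).IsPositive := by
  rw [ContinuousLinearMap.isPositive_def']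
  constructor
  · rw [IsSelfAdjoint]
    rw [star_smul, star_one, RCLike.star_def, Complex.conj_ofReal]
  · intro x
    have : ((r : ℂ) • (1 : H →L[ℂ] H)) x = (r : ℂ) • x := rfl
    rw [ContinuousLinearMap.reApplyInnerSelf_apply, this, inner_smul_left,
      Complex.conj_ofReal]
    have h6 : RCLike.re ((r:ℂ) * (inner ℂ x x : ℂ)) = r * RCLike.re (inner ℂ x x : ℂ) := by
      simp [RCLike.re_to_complex, Complex.mul_re]
    rw [h6]
    exact mul_nonneg hr inner_self_nonneg

lemma IsPositive.apply_eq_zero {A : H →L[ℂ] H} (hA : A.IsPositive) {x : H}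
    (hx : Complex.re (inner ℂ (A x) x : ℂ) = 0) : A x = 0 := by
  have h0 : (0 : H →L[ℂ] H) ≤ A := (ContinuousLinearMap.nonneg_iff_isPositive A).mpr hA
  set b : H →L[ℂ] H := CFC.sqrt A with hb_def
  have hb : b * b = A := CFC.sqrt_mul_sqrt_self A h0
  have hbnn : (0 : H →L[ℂ] H) ≤ b := CFC.sqrt_nonneg A
  have hbsa := ContinuousLinearMap.isSelfAdjoint_iff'.mp (IsSelfAdjoint.of_nonneg hbnn)
  have hA1 : A x = b (b x) := by rw [← hb]; rfl
  have h2 : (inner ℂ (A x) x : ℂ) = inner ℂ (b x) (b x) := by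
    have h5 := ContinuousLinearMap.adjoint_inner_left b x (b x)
    rw [hbsa] at h5
    rw [hA1, h5]
  rw [h2] at hx
  have h3 : ‖b x‖^2 = 0 := by
    rw [← inner_self_eq_norm_sq (𝕜 := ℂ)]
    exact hx
  have h4 : b x = 0 := by
    have := pow_eq_zero_iff (n := 2) (by norm_num) |>.mp h3
    simpa using this
  rw [hA1, h4, map_zero]

end Statement17Aux
namespace Statement17Aux

lemma key_ident {L : Type*} [Ring L] [Algebra ℂ L] [StarRing L] [StarModule ℂ L]
    {n : ℕ} (T : Fin n → L) (lam : Fin n → ℂ) (g B X : L) (s c m : ℂ)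
    (hgB : g * B = g - 1) (hBg : star B * star g = star g - 1)
    (hB : B = ∑ i, starRingEnd ℂ (lam i) • T i)
    (hm : (∑ i, lam i * starRingEnd ℂ (lam i)) = m)
    (hm' : m = 1 - s^2) (hc : c = (1 + s)⁻¹) (hs1 : (1:ℂ) + s ≠ 0)
    (hs : star s = s) (hcs : star c = c) :
    ∑ i, ((c * lam i) • (1:L) + (s * c * lam i) • g - s • (g * T i)) * X *
      star ((c * lam i) • (1:L) + (s * c * lam i) • g - s • (g * T i))
      = X + (s^2) • (g * ((∑ i, T i * X * star (T i)) - X) * star g) := by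
  set u : L := c • 1 + (c * s) • g with hu
  set us : L := c • 1 + (c * s) • star g with hus
  have hstaru : star u = us := by
    rw [hu, hus, star_add, star_smul, star_smul, star_one, star_mul', hs, hcs]
  have hstarB : star B = ∑ i, lam i • star (T i) := by
    rw [hB, star_sum]
    exact Finset.sum_congr rfl fun i _ => by
      rw [star_smul]; congr 1; exact Complex.conj_conj _
  have expand : ∀ i : Fin n,
      ((c * lam i) • (1:L) + (s * c * lam i) • g - s • (g * T i)) * X *
        star ((c * lam i) • (1:L) + (s * c * lam i) • g - s • (g * T i))
      = (lam i * starRingEnd ℂ (lam i)) • (u * X * us)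
        - s • (u * (X * ((lam i • star (T i)) * star g)))
        - s • (g * ((starRingEnd ℂ (lam i) • T i) * (X * us)))
        + (s^2) • (g * ((T i * X * star (T i)) * star g)) := by
    intro i
    have hphi : (c * lam i) • (1:L) + (s * c * lam i) • g - s • (g * T i)
        = lam i • u - s • (g * T i) := by
      rw [hu, smul_add, smul_smul, smul_smul]; ring_nf
    have h1 : star (lam i • u - s • (g * T i))
        = starRingEnd ℂ (lam i) • us - s • (star (T i) * star g) := by
      rw [star_sub, star_smul, star_smul, star_mul, hs, hstaru]; rfl
    rw [hphi, h1]
    simp only [sub_mul, mul_sub, smul_mul_assoc, mul_smul_comm, smul_smul, smul_sub, smul_add,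
      mul_assoc]
    match_scalars <;> ring
  rw [Finset.sum_congr rfl fun i _ => expand i]
  have step : ∀ (a b c' d : Fin n → L),
      ∑ i, (a i - b i - c' i + d i) = ∑ i, a i - ∑ i, b i - ∑ i, c' i + ∑ i, d i := by
    intro a b c' d
    simp [Finset.sum_add_distrib, Finset.sum_sub_distrib]
  rw [step]
  have e1 : ∑ i : Fin n, (lam i * starRingEnd ℂ (lam i)) • (u * X * us) = m • (u * X * us) := by
    rw [← Finset.sum_smul, hm]
  have e2 : ∑ i : Fin n, s • (u * (X * ((lam i • star (T i)) * star g)))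
      = s • (u * (X * (star B * star g))) := by
    rw [← Finset.smul_sum, ← Finset.mul_sum, ← Finset.mul_sum, ← Finset.sum_mul, ← hstarB]
  have e3 : ∑ i : Fin n, s • (g * ((starRingEnd ℂ (lam i) • T i) * (X * us)))
      = s • (g * (B * (X * us))) := by
    rw [← Finset.smul_sum, ← Finset.mul_sum, ← Finset.sum_mul, ← hB]
  have e4 : ∑ i : Fin n, (s^2) • (g * ((T i * X * star (T i)) * star g))
      = s^2 • (g * ((∑ i, T i * X * star (T i)) * star g)) := by
    rw [← Finset.smul_sum, ← Finset.mul_sum, ← Finset.sum_mul]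
  rw [e1, e2, e3, e4]
  rw [hBg]
  have h2 : g * (B * (X * us)) = (g * B) * (X * us) := by rw [mul_assoc]
  rw [h2, hgB, hu, hus]
  simp only [mul_add, add_mul, sub_mul, mul_sub, smul_mul_assoc, mul_smul_comm, smul_smul,
    one_mul, mul_one, smul_sub, smul_add, mul_assoc]
  match_scalars <;> (subst hc hm'; field_simp; try ring)

end Statement17Aux
/-- If `T` is of class `C_1` (i.e. `ker A_∞(T) = {0}`) then so is `φ_λ(T)`. -/
theorem statement17 (hn : 1 ≤ n) (T : Fin n → H →L[ℂ] H)
    (hcomm : ∀ i j, T i ∘L T j = T j ∘L T i)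
    (hmc : ((1 : H →L[ℂ] H) - ∑ i, T i ∘L adjoint (T i)).IsPositive)
    (lam : EuclideanSpace ℂ (Fin n)) (hlam : ‖lam‖ < 1)
    (AinfT AinfP : H →L[ℂ] H)
    (hAT : ∀ x : H, Tendsto (fun k => ((rho T)^[k] 1) x) atTop (nhds (AinfT x)))
    (hAP : ∀ x : H, Tendsto (fun k => ((rho (comps (phiOp lam T)))^[k] 1) x) atTop
      (nhds (AinfP x)))
    (hC1 : LinearMap.ker (AinfT : H →ₗ[ℂ] H) = ⊥) :
    LinearMap.ker (AinfP : H →ₗ[ℂ] H) = ⊥ := by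
  classical
  rcases subsingleton_or_nontrivial H with hH | hH
  · rw [Submodule.eq_bot_iff]
    intro x _
    exact Subsingleton.elim x 0
  -- scalar bookkeeping
  have hn0 : (0:ℝ) ≤ ‖lam‖ := norm_nonneg _
  have hm1 : ‖lam‖^2 < 1 := by nlinarith
  have hm0 : (0:ℝ) ≤ ‖lam‖^2 := sq_nonneg _
  obtain ⟨s, hs_def⟩ : ∃ s : ℝ, s = Real.sqrt (1 - ‖lam‖^2) := ⟨_, rfl⟩
  have hs0 : 0 < s := hs_def ▸ Real.sqrt_pos.mpr (by linarith)
  have hs2 : s^2 = 1 - ‖lam‖^2 := hs_def ▸ Real.sq_sqrt (by linarith)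
  have hs1 : (0:ℝ) < 1 + s := by linarith
  obtain ⟨c, hc_def⟩ : ∃ c : ℝ, c = (1+s)⁻¹ := ⟨_, rfl⟩
  have hc0 : 0 < c := by rw [hc_def]; positivity
  have hcs : c * (1+s) = 1 := by rw [hc_def]; exact inv_mul_cancel₀ (ne_of_gt hs1)
  have hcm : c * ‖lam‖^2 = 1 - s := by
    have h : ‖lam‖^2 = (1+s)*(1-s) := by nlinarith
    rw [h, ← mul_assoc, hcs, one_mul]
  have hcsC : ((c:ℝ):ℂ) * (1 + ((s:ℝ):ℂ)) = 1 := by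
    exact_mod_cast hcs
  -- basic operator identities
  have hRR : rowOp T ∘L adjoint (rowOp T) = ∑ i, T i ∘L adjoint (T i) :=
    Statement17Aux.rowOp_comp_adjoint_rowOp T
  have hLL : rowC (H := H) lam ∘L adjoint (rowC lam) = ((‖lam‖^2 : ℝ) : ℂ) • 1 :=
    Statement17Aux.rowC_comp_adjoint_rowC lam
  -- norm bounds
  have hadjR : ∀ y : H, ‖adjoint (rowOp T) y‖ ≤ ‖y‖ := by
    intro y
    have h1 := ContinuousLinearMap.adjoint_inner_left (rowOp T) (adjoint (rowOp T) y) y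
    have h3 : ‖adjoint (rowOp T) y‖^2
        = RCLike.re (inner ℂ y ((rowOp T) (adjoint (rowOp T) y)) : ℂ) := by
      rw [← inner_self_eq_norm_sq (𝕜 := ℂ), h1]
    have h2 : (rowOp T) (adjoint (rowOp T) y)
        = y - ((1 - ∑ i, T i ∘L adjoint (T i)) y) := by
      rw [← ContinuousLinearMap.comp_apply, hRR]
      simp
    rw [h2, inner_sub_right, map_sub, inner_self_eq_norm_sq (𝕜 := ℂ)] at h3
    have h5 : 0 ≤ RCLike.re (inner ℂ y (((1 - ∑ i, T i ∘L adjoint (T i))) y) : ℂ) :=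
      hmc.re_inner_nonneg_right y
    nlinarith [norm_nonneg (adjoint (rowOp T) y), norm_nonneg y]
  have hadjL : ∀ y : H, ‖adjoint (rowC (H := H) lam) y‖ ≤ ‖lam‖ * ‖y‖ := by
    intro y
    have h1 := ContinuousLinearMap.adjoint_inner_left (rowC (H := H) lam)
      (adjoint (rowC (H := H) lam) y) y
    have h3 : ‖adjoint (rowC (H := H) lam) y‖^2
        = RCLike.re (inner ℂ y ((rowC (H := H) lam) (adjoint (rowC (H := H) lam) y)) : ℂ) := by
      rw [← inner_self_eq_norm_sq (𝕜 := ℂ), h1]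
    have h2 : (rowC (H := H) lam) (adjoint (rowC (H := H) lam) y)
        = ((‖lam‖^2 : ℝ) : ℂ) • y := by
      rw [← ContinuousLinearMap.comp_apply, hLL]
      rfl
    rw [h2, inner_smul_right] at h3
    have h4 : RCLike.re ((((‖lam‖^2:ℝ):ℂ)) * (inner ℂ y y : ℂ)) = ‖lam‖^2 * ‖y‖^2 := by
      have h6 : RCLike.re ((((‖lam‖^2:ℝ):ℂ)) * (inner ℂ y y : ℂ))
          = ‖lam‖^2 * RCLike.re (inner ℂ y y : ℂ) := by
        simp only [RCLike.re_to_complex, Complex.mul_re, Complex.ofReal_re,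
          Complex.ofReal_im]
        ring
      rw [h6, inner_self_eq_norm_sq (𝕜 := ℂ)]
    rw [h4] at h3
    nlinarith [norm_nonneg (adjoint (rowC (H := H) lam) y), norm_nonneg y, norm_nonneg lam,
      mul_nonneg hn0 (norm_nonneg y),
      sq_nonneg (‖adjoint (rowC (H := H) lam) y‖ - ‖lam‖*‖y‖),
      sq_nonneg (‖adjoint (rowC (H := H) lam) y‖ + ‖lam‖*‖y‖)]
  have hRn : ‖rowOp T‖ ≤ 1 := by
    rw [← (ContinuousLinearMap.adjoint :
      ((Hn H n) →L[ℂ] H) ≃ₗᵢ⋆[ℂ] (H →L[ℂ] Hn H n)).norm_map (rowOp T)]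
    exact ContinuousLinearMap.opNorm_le_bound _ zero_le_one (fun y => by
      rw [one_mul]; exact hadjR y)
  have hLn : ‖adjoint (rowC (H := H) lam)‖ ≤ ‖lam‖ :=
    ContinuousLinearMap.opNorm_le_bound _ hn0 hadjL
  -- B and g
  obtain ⟨B, hB_def⟩ : ∃ B' : H →L[ℂ] H, B' = rowOp T ∘L adjoint (rowC lam) := ⟨_, rfl⟩
  have hBsum : B = ∑ i, starRingEnd ℂ (lam i) • T i := by
    rw [hB_def]; exact Statement17Aux.rowOp_comp_adjoint_rowC T lam
  have hBn : ‖B‖ < 1 := by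
    calc ‖B‖ ≤ ‖rowOp T‖ * ‖adjoint (rowC (H := H) lam)‖ := by
          rw [hB_def]; exact ContinuousLinearMap.opNorm_comp_le _ _
    _ ≤ 1 * ‖lam‖ := mul_le_mul hRn hLn (norm_nonneg _) zero_le_one
    _ < 1 := by rwa [one_mul]
  have hBu : IsUnit ((1 : H →L[ℂ] H) - B) := isUnit_one_sub_of_norm_lt_one hBn
  obtain ⟨g, hg_def⟩ : ∃ g' : H →L[ℂ] H, g' = Ring.inverse (1 - B) := ⟨_, rfl⟩
  have hg1 : g * (1 - B) = 1 := by rw [hg_def]; exact Ring.inverse_mul_cancel _ hBu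
  have h1g : (1 - B) * g = 1 := by rw [hg_def]; exact Ring.mul_inverse_cancel _ hBu
  have hgB : g * B = g - 1 := by
    have h := hg1
    rw [mul_sub, mul_one] at h
    have h' := sub_eq_iff_eq_add.mp h
    rw [add_comm] at h'
    exact eq_sub_of_add_eq h'.symm
  have hgBstar : star B * star g = star g - 1 := by
    have h := congrArg star hgB
    rw [star_mul, star_sub, star_one] at h
    exact h
  -- defectStar of rowC
  have hDstar : defectStar (rowC (H := H) lam) = ((s:ℝ):ℂ) • 1 := by
    unfold defectStar
    have hmul : (((s:ℝ):ℂ) • (1 : H →L[ℂ] H)) * (((s:ℝ):ℂ) • 1)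
        = (((s:ℝ):ℂ)*((s:ℝ):ℂ)) • 1 := by
      rw [smul_mul_assoc, one_mul, smul_smul]
    have hss : ((s:ℝ):ℂ)*((s:ℝ):ℂ) = 1 - ((‖lam‖^2:ℝ):ℂ) := by
      have hr : s*s = 1 - ‖lam‖^2 := by nlinarith
      exact_mod_cast hr
    have ha : (1 : H →L[ℂ] H) - rowC (H := H) lam ∘L adjoint (rowC lam)
        = (((s:ℝ):ℂ) • (1 : H →L[ℂ] H)) * (((s:ℝ):ℂ) • 1) := by
      rw [hLL, hmul, hss, sub_smul, one_smul]
    rw [ha]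
    exact CFC.sqrt_mul_self _ ((ContinuousLinearMap.nonneg_iff_isPositive _).mpr
      (Statement17Aux.isPositive_real_smul_one hs0.le))
  -- defect of rowC
  have hLx : ∀ x : Hn H n, ‖rowC (H := H) lam x‖ ≤ ‖lam‖ * ‖x‖ := by
    intro x
    calc ‖rowC (H := H) lam x‖ ≤ ‖rowC (H := H) lam‖ * ‖x‖ :=
          ContinuousLinearMap.le_opNorm _ _
    _ ≤ ‖lam‖ * ‖x‖ := by
        have hnm := (ContinuousLinearMap.adjoint :
          ((Hn H n) →L[ℂ] H) ≃ₗᵢ⋆[ℂ] (H →L[ℂ] Hn H n)).norm_map (rowC (H := H) lam)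
        rw [← hnm]
        exact mul_le_mul_of_nonneg_right hLn (norm_nonneg x)
  have hNN : (adjoint (rowC (H := H) lam) ∘L rowC lam) ∘L (adjoint (rowC (H := H) lam) ∘L rowC lam)
      = ((‖lam‖^2:ℝ):ℂ) • (adjoint (rowC (H := H) lam) ∘L rowC lam) := by
    rw [ContinuousLinearMap.comp_assoc, ← ContinuousLinearMap.comp_assoc (rowC (H := H) lam),
      hLL, ContinuousLinearMap.smul_comp, ContinuousLinearMap.one_def,
      ContinuousLinearMap.id_comp, ContinuousLinearMap.comp_smul]
  have hD : defect (rowC (H := H) lam)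
      = 1 - ((c:ℝ):ℂ) • (adjoint (rowC (H := H) lam) ∘L rowC lam) := by
    unfold defect
    refine CFC.sqrt_unique ?_ ?_
    · have hNmul : (adjoint (rowC (H := H) lam) ∘L rowC lam)
          * (adjoint (rowC (H := H) lam) ∘L rowC lam)
          = ((‖lam‖^2:ℝ):ℂ) • (adjoint (rowC (H := H) lam) ∘L rowC lam) := hNN
      have hco : ((c:ℝ):ℂ) * (((c:ℝ):ℂ) * ((‖lam‖:ℝ):ℂ)^2) = 2*((c:ℝ):ℂ) - 1 := by
        have hr : c * (c * ‖lam‖^2) = 2*c - 1 := by nlinarith [hcm, hcs]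
        exact_mod_cast hr
      simp only [sub_mul, mul_sub, one_mul, mul_one, smul_mul_assoc, mul_smul_comm, smul_smul]
      rw [hNmul]
      match_scalars <;> push_cast <;> first
        | ring1
        | linear_combination hco
    · rw [ContinuousLinearMap.nonneg_iff_isPositive, ContinuousLinearMap.isPositive_def']
      constructor
      · rw [IsSelfAdjoint, star_sub, star_one, star_smul]
        congr 1
        rw [RCLike.star_def, Complex.conj_ofReal]
        congr 1
        rw [ContinuousLinearMap.star_eq_adjoint, ContinuousLinearMap.adjoint_comp,
          ContinuousLinearMap.adjoint_adjoint]
      · intro x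
        rw [ContinuousLinearMap.reApplyInnerSelf_apply]
        have happ : ((1 : Hn H n →L[ℂ] Hn H n)
            - ((c:ℝ):ℂ) • (adjoint (rowC (H := H) lam) ∘L rowC lam)) x
            = x - ((c:ℝ):ℂ) • (adjoint (rowC (H := H) lam) ((rowC (H := H) lam) x)) := by
          simp [ContinuousLinearMap.sub_apply, ContinuousLinearMap.smul_apply]
        rw [happ, inner_sub_left, map_sub, inner_smul_left]
        have hNin := ContinuousLinearMap.adjoint_inner_left (rowC (H := H) lam) x
          ((rowC (H := H) lam) x)
        rw [hNin, Complex.conj_ofReal]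
        have h6 : RCLike.re (((c:ℝ):ℂ)
              * (inner ℂ ((rowC (H := H) lam) x) ((rowC (H := H) lam) x) : ℂ))
            = c * ‖(rowC (H := H) lam) x‖^2 := by
          have h7 : RCLike.re (((c:ℝ):ℂ)
              * (inner ℂ ((rowC (H := H) lam) x) ((rowC (H := H) lam) x) : ℂ))
              = c * RCLike.re
                ((inner ℂ ((rowC (H := H) lam) x) ((rowC (H := H) lam) x)) : ℂ) := by
            simp only [RCLike.re_to_complex, Complex.mul_re, Complex.ofReal_re,
              Complex.ofReal_im]
            ring
          rw [h7, inner_self_eq_norm_sq (𝕜 := ℂ)]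
        rw [h6, inner_self_eq_norm_sq (𝕜 := ℂ)]
        have h8 := hLx x
        nlinarith [norm_nonneg ((rowC (H := H) lam) x), norm_nonneg x, norm_nonneg lam]
  -- the inverse in phiOp
  have hinv : Ring.inverse ((1 : H →L[ℂ] H) + (-(rowOp T)) ∘L adjoint (rowC lam)) = g := by
    have h : (1 : H →L[ℂ] H) + (-(rowOp T)) ∘L adjoint (rowC lam) = 1 - B := by
      rw [ContinuousLinearMap.neg_comp, ← hB_def, sub_eq_add_neg]
    rw [h, hg_def]
  -- the components of phiOp
  have hcomps : ∀ i, comps (phiOp lam T) i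
      = (((c:ℝ):ℂ) * lam i) • 1 + ((((s:ℝ):ℂ) * ((c:ℝ):ℂ)) * lam i) • g
        - ((s:ℝ):ℂ) • (g * T i) := by
    intro i
    show phiOp lam T ∘L inclL i = _
    unfold phiOp Psi
    rw [hDstar, hD, hinv]
    rw [ContinuousLinearMap.add_comp, Statement17Aux.rowC_comp_inclL]
    have hsub : ((1 : Hn H n →L[ℂ] Hn H n)
        - ((c:ℝ):ℂ) • (adjoint (rowC (H := H) lam) ∘L rowC lam)) ∘L inclL i
        = inclL i - (((c:ℝ):ℂ) * lam i) • adjoint (rowC (H := H) lam) := by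
      rw [ContinuousLinearMap.sub_comp, ContinuousLinearMap.one_def,
        ContinuousLinearMap.id_comp, ContinuousLinearMap.smul_comp,
        ContinuousLinearMap.comp_assoc, Statement17Aux.rowC_comp_inclL,
        ContinuousLinearMap.comp_smul, ContinuousLinearMap.one_def,
        ContinuousLinearMap.comp_id, smul_smul]
    simp only [ContinuousLinearMap.comp_assoc]
    rw [hsub]
    have hW : (-(rowOp T)) ∘L (inclL i - (((c:ℝ):ℂ) * lam i) • adjoint (rowC (H := H) lam))
        = -(T i) + (((c:ℝ):ℂ) * lam i) • B := by
      rw [ContinuousLinearMap.comp_sub, ContinuousLinearMap.neg_comp,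
        ContinuousLinearMap.neg_comp, Statement17Aux.rowOp_comp_inclL,
        ContinuousLinearMap.comp_smul, ← hB_def, sub_neg_eq_add]
    rw [hW]
    have hg2 : g ∘L (-(T i) + (((c:ℝ):ℂ) * lam i) • B)
        = -(g * T i) + (((c:ℝ):ℂ) * lam i) • (g - 1) := by
      rw [ContinuousLinearMap.comp_add, ContinuousLinearMap.comp_neg,
        ContinuousLinearMap.comp_smul, ← ContinuousLinearMap.mul_def,
        ← ContinuousLinearMap.mul_def, hgB]
    rw [hg2]
    have hsm : (((s:ℝ):ℂ) • (1 : H →L[ℂ] H)) ∘L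
        (-(g * T i) + (((c:ℝ):ℂ) * lam i) • (g - 1))
        = ((s:ℝ):ℂ) • (-(g * T i) + (((c:ℝ):ℂ) * lam i) • (g - 1)) := by
      rw [ContinuousLinearMap.smul_comp, ContinuousLinearMap.one_def,
        ContinuousLinearMap.id_comp]
    rw [hsm]
    simp only [smul_add, smul_neg, smul_smul, smul_sub]
    match_scalars
    · linear_combination (-(lam i)) * hcsC
    · ring
    · ring
  -- fixed point of rho T
  have hfixT : rho T AinfT = AinfT := Statement17Aux.rho_fixed T hAT
  -- key identity data
  have hmsum : (∑ i, lam i * starRingEnd ℂ (lam i)) = ((‖lam‖^2:ℝ):ℂ) := by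
    rw [← Statement17Aux.sum_conj_mul_self lam]
    exact Finset.sum_congr rfl fun i _ => mul_comm _ _
  have hmC : ((‖lam‖^2:ℝ):ℂ) = 1 - ((s:ℝ):ℂ)^2 := by
    have hr : ‖lam‖^2 = 1 - s^2 := by nlinarith
    exact_mod_cast hr
  have hcC : ((c:ℝ):ℂ) = (1 + ((s:ℝ):ℂ))⁻¹ := by
    exact_mod_cast hc_def
  have hs1C : (1:ℂ) + ((s:ℝ):ℂ) ≠ 0 := by
    have h : ((1+s:ℝ):ℂ) ≠ 0 := Complex.ofReal_ne_zero.mpr (ne_of_gt hs1)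
    push_cast at h
    exact h
  have hsstar : star ((s:ℝ):ℂ) = ((s:ℝ):ℂ) := by rw [RCLike.star_def, Complex.conj_ofReal]
  have hcstar : star ((c:ℝ):ℂ) = ((c:ℝ):ℂ) := by rw [RCLike.star_def, Complex.conj_ofReal]
  have hkey := Statement17Aux.key_ident T (fun i => lam i) g B AinfT
    ((s:ℝ):ℂ) ((c:ℝ):ℂ) ((‖lam‖^2:ℝ):ℂ)
    hgB hgBstar hBsum hmsum hmC hcC hs1C hsstar hcstar
  have hrhoT : (∑ i, T i * AinfT * star (T i)) = AinfT := by
    rw [← Statement17Aux.rho_eq_star]; exact hfixT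
  rw [hrhoT] at hkey
  -- fixed point of rho phi
  have hfixP : rho (comps (phiOp lam T)) AinfT = AinfT := by
    rw [Statement17Aux.rho_eq_star]
    simp only [hcomps]
    rw [hkey]
    simp
  -- positivity of iterates
  have hpos1 : ((1 : H →L[ℂ] H) - rho T 1).IsPositive := by
    rw [Statement17Aux.rho_one]; exact hmc
  have hiter_le : ∀ k, ((1 : H →L[ℂ] H) - (rho T)^[k] 1).IsPositive := by
    intro k
    induction k with
    | zero => simpa using ContinuousLinearMap.isPositive_zero
    | succ k ih =>
      rw [Function.iterate_succ_apply']
      have heq : (1 : H →L[ℂ] H) - rho T ((rho T)^[k] 1)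
          = (1 - rho T 1) + rho T (1 - (rho T)^[k] 1) := by
        rw [Statement17Aux.rho_sub]
        have hone : rho T ((1:H →L[ℂ] H)) = rho T 1 := rfl
        abel
      rw [heq]
      exact hpos1.add (Statement17Aux.rho_isPositive T ih)
  have hA1 : ((1 : H →L[ℂ] H) - AinfT).IsPositive := by
    apply Statement17Aux.isPositive_limit hiter_le
    intro x
    have h := (tendsto_const_nhds (x := x) (f := atTop)).sub (hAT x)
    simpa [ContinuousLinearMap.sub_apply] using h
  have hiter_posT : ∀ k, ((rho T)^[k] (1 : H →L[ℂ] H)).IsPositive := by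
    intro k
    induction k with
    | zero => simpa using ContinuousLinearMap.isPositive_one
    | succ k ih =>
      rw [Function.iterate_succ_apply']
      exact Statement17Aux.rho_isPositive T ih
  have hApos : AinfT.IsPositive := Statement17Aux.isPositive_limit hiter_posT hAT
  have hstep : ∀ k, ((((rho (comps (phiOp lam T)))^[k]) 1 - AinfT)).IsPositive := by
    intro k
    induction k with
    | zero => simpa using hA1
    | succ k ih =>
      rw [Function.iterate_succ_apply']
      have heq : rho (comps (phiOp lam T)) ((rho (comps (phiOp lam T)))^[k] 1) - AinfT
          = rho (comps (phiOp lam T)) (((rho (comps (phiOp lam T)))^[k] 1) - AinfT) := by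
        rw [Statement17Aux.rho_sub, hfixP]
      rw [heq]
      exact Statement17Aux.rho_isPositive _ ih
  -- conclusion
  rw [Submodule.eq_bot_iff]
  intro x hx
  have hx0 : AinfP x = 0 := LinearMap.mem_ker.mp hx
  have hle : ∀ k, RCLike.re (inner ℂ (AinfT x) x : ℂ)
      ≤ RCLike.re (inner ℂ (((rho (comps (phiOp lam T)))^[k] 1) x) x : ℂ) := by
    intro k
    have h := (hstep k).re_inner_nonneg_left x
    have h2 : ((((rho (comps (phiOp lam T)))^[k] 1) - AinfT) x)
        = (((rho (comps (phiOp lam T)))^[k] 1) x) - AinfT x :=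
      ContinuousLinearMap.sub_apply _ _ _
    rw [h2, inner_sub_left, map_sub] at h
    linarith
  have htd : Tendsto (fun k => RCLike.re (inner ℂ (((rho (comps (phiOp lam T)))^[k] 1) x) x : ℂ))
      atTop (nhds (RCLike.re (inner ℂ (AinfP x) x : ℂ))) :=
    (Complex.continuous_re.tendsto _).comp ((hAP x).inner tendsto_const_nhds)
  have h7 : RCLike.re (inner ℂ (AinfT x) x : ℂ) ≤ RCLike.re (inner ℂ (AinfP x) x : ℂ) :=
    ge_of_tendsto' htd hle
  rw [hx0] at h7
  rw [inner_zero_left, map_zero] at h7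
  have h8 : RCLike.re (inner ℂ (AinfT x) x : ℂ) = 0 :=
    le_antisymm h7 (hApos.re_inner_nonneg_left x)
  have h9 : AinfT x = 0 := Statement17Aux.IsPositive.apply_eq_zero hApos h8
  have hxk : x ∈ LinearMap.ker (AinfT : H →ₗ[ℂ] H) := LinearMap.mem_ker.mpr h9
  rw [hC1] at hxk
  simpa using hxk
end
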